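/- arXiv:1808.10637 — 2 statements merged into one kernel-verified Lean document; each statement's English description precedes it below -/
import Mathlib

section
/- Let n ≥ 3 and p = (n+2)/(n−2). Then ∫_{ℝ^n} p U(y)^{p−1} Z_{n+1}(y) dy = −((n−2)/2) ∫_{ℝ^n} U(y)^p dy, where Z_{n+1}(y) = ((n−2)/2)U(y) + y·∇U(y); both integrals are finite. -/
open Set MeasureTheory Filter Topology Metric Bornology

noncomputable section

/-- The Laplacian of a scalar function on Euclidean `ℝⁿ`, as the sum of second
partial derivatives in the coordinate directions. -/
def lap {n : ℕ} (f : EuclideanSpace ℝ (Fin n) → ℝ) (x : EuclideanSpace ℝ (Fin n)) : ℝ :=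
  ∑ i : Fin n, fderiv ℝ (fun y => fderiv ℝ f y (EuclideanSpace.single i 1)) x
    (EuclideanSpace.single i 1)

/-- The standard Aubin–Talenti bubble `U(y) = α_n (1+|y|²)^{-(n-2)/2}` with
`α_n = (n(n-2))^{(n-2)/4}`. -/
def stdBubble (n : ℕ) (y : EuclideanSpace ℝ (Fin n)) : ℝ :=
  ((n : ℝ) * ((n : ℝ) - 2)) ^ (((n : ℝ) - 2) / 4) * (1 + ‖y‖ ^ 2) ^ (-(((n : ℝ) - 2) / 2))

/-- The kernel elements `Z_i(y) = ∂U/∂y_i`, `i = 1, …, n`. -/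
def kerZ (n : ℕ) (i : Fin n) (y : EuclideanSpace ℝ (Fin n)) : ℝ :=
  fderiv ℝ (stdBubble n) y (EuclideanSpace.single i 1)

/-- The kernel element `Z_{n+1}(y) = ((n-2)/2) U(y) + y·∇U(y)`. -/
def kerZlast (n : ℕ) (y : EuclideanSpace ℝ (Fin n)) : ℝ :=
  ((n : ℝ) - 2) / 2 * stdBubble n y + fderiv ℝ (stdBubble n) y y

/-!
Writing `p = (n+2)/(n-2)` and `α = bubbleConst n`, both integrands are explicit combinations of
`(1 + |y|²)^{-s/2}`: `U^p = α^p (1+|y|²)^{-(n+2)/2}` and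
`p U^{p-1} Z_{n+1} = α^p (n+2)/2 · (2 (1+|y|²)^{-(n+4)/2} - (1+|y|²)^{-(n+2)/2})`.
The identity then reduces to `(n+2) ∫ (1+|y|²)^{-(n+4)/2} = 2 ∫ (1+|y|²)^{-(n+2)/2}`, the case
`s = n + 2` of the recursion `s I_{s+2} = (s - n) I_s` for `I_s = ∫ (1+|y|²)^{-s/2}`. In polar
coordinates the integrand of `s I_{s+2} - (s - n) I_s` is the exact derivative of
`r ↦ r^n (1+r²)^{-s/2}`, which vanishes at `0` and at infinity.
-/

theorem hasDerivAt_pow_mul_one_add_sq_rpow {d : ℕ} (hd : 1 ≤ d) (s r : ℝ) :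
    HasDerivAt (fun t : ℝ => t ^ d * (1 + t ^ 2) ^ (-s / 2))
      (r ^ (d - 1) * ((d - s) * (1 + r ^ 2) ^ (-s / 2) + s * (1 + r ^ 2) ^ (-(s + 2) / 2))) r := by
  have hpos : (0 : ℝ) < 1 + r ^ 2 := by positivity
  have hsq : HasDerivAt (fun t : ℝ => 1 + t ^ 2) (2 * r) r := by
    simpa using (hasDerivAt_pow 2 r).const_add 1
  have hrpow := (Real.hasDerivAt_rpow_const (p := -s / 2) (Or.inl hpos.ne')).comp r hsq
  refine ((hasDerivAt_pow d r).mul hrpow).congr_deriv ?_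
  have hexp : (1 + r ^ 2) ^ (-s / 2) = (1 + r ^ 2) ^ (-(s + 2) / 2) * (1 + r ^ 2) := by
    rw [← Real.rpow_add_one hpos.ne']; ring_nf
  have hpow : r ^ d = r ^ (d - 1) * r := by rw [← pow_succ, Nat.sub_add_cancel hd]
  rw [Function.comp_apply, show -s / 2 - 1 = -(s + 2) / 2 by ring, hexp, hpow]
  ring

theorem tendsto_pow_mul_one_add_sq_rpow_atTop {d : ℕ} {s : ℝ} (hs : (d : ℝ) < s) :
    Tendsto (fun t : ℝ => t ^ d * (1 + t ^ 2) ^ (-s / 2)) atTop (𝓝 0) := by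
  have hbound : ∀ t : ℝ, 0 ≤ t → t ^ d * (1 + t ^ 2) ^ (-s / 2) ≤ (1 + t ^ 2) ^ (-((s - d) / 2)) := by
    intro t ht
    have hpos : (0 : ℝ) < 1 + t ^ 2 := by positivity
    have hle : t ^ d ≤ (1 + t ^ 2) ^ ((d : ℝ) / 2) :=
      calc t ^ d ≤ √(1 + t ^ 2) ^ d := pow_le_pow_left₀ ht (Real.le_sqrt_of_sq_le (by linarith)) d
        _ = (1 + t ^ 2) ^ ((d : ℝ) / 2) := by
          rw [Real.sqrt_eq_rpow, ← Real.rpow_mul_natCast hpos.le]; ring_nf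
    calc t ^ d * (1 + t ^ 2) ^ (-s / 2)
        ≤ (1 + t ^ 2) ^ ((d : ℝ) / 2) * (1 + t ^ 2) ^ (-s / 2) := by gcongr
      _ = (1 + t ^ 2) ^ (-((s - d) / 2)) := by rw [← Real.rpow_add hpos]; ring_nf
  have hlim : Tendsto (fun t : ℝ => (1 + t ^ 2) ^ (-((s - d) / 2))) atTop (𝓝 0) :=
    (tendsto_rpow_neg_atTop (by linarith)).comp
      (tendsto_atTop_add_const_left _ _ (tendsto_pow_atTop two_ne_zero))
  refine tendsto_of_tendsto_of_tendsto_of_le_of_le' tendsto_const_nhds hlim ?_ ?_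
  · filter_upwards [eventually_ge_atTop 0] with t ht using by positivity
  · filter_upwards [eventually_ge_atTop 0] with t ht using hbound t ht

theorem integral_one_add_norm_sq_rpow_recursion {E : Type*} [NormedAddCommGroup E]
    [NormedSpace ℝ E] [FiniteDimensional ℝ E] [Nontrivial E] [MeasurableSpace E] [BorelSpace E]
    (μ : Measure E) [μ.IsAddHaarMeasure] {s : ℝ} (hs : (Module.finrank ℝ E : ℝ) < s) :
    s * ∫ x, (1 + ‖x‖ ^ 2) ^ (-(s + 2) / 2) ∂μ =
      (s - Module.finrank ℝ E) * ∫ x, (1 + ‖x‖ ^ 2) ^ (-s / 2) ∂μ := by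
  set d := Module.finrank ℝ E
  have hd : 1 ≤ d := Module.finrank_pos
  set h : ℝ → ℝ := fun r => (d - s) * (1 + r ^ 2) ^ (-s / 2) + s * (1 + r ^ 2) ^ (-(s + 2) / 2)
  have hint_s := integrable_rpow_neg_one_add_norm_sq (μ := μ) hs
  have hint_s2 := integrable_rpow_neg_one_add_norm_sq (μ := μ) (r := s + 2) (by linarith)
  have hint : Integrable (fun x => h ‖x‖) μ := (hint_s.const_mul _).add (hint_s2.const_mul _)
  have hradial : ∫ r in Ioi (0 : ℝ), r ^ (d - 1) • h r = 0 := by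
    rw [integral_Ioi_of_hasDerivAt_of_tendsto' (f' := fun r => r ^ (d - 1) • h r)
      (fun r _ => hasDerivAt_pow_mul_one_add_sq_rpow hd s r)
      ((integrable_fun_norm_addHaar μ).1 hint) (tendsto_pow_mul_one_add_sq_rpow_atTop hs)]
    simp [zero_pow (by omega : d ≠ 0)]
  have hzero : ∫ x, h ‖x‖ ∂μ = 0 := by
    rw [integral_fun_norm_addHaar μ h, hradial, smul_zero, smul_zero]
  rw [integral_add (hint_s.const_mul _) (hint_s2.const_mul _), integral_const_mul,
    integral_const_mul] at hzero
  linear_combination hzero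

theorem fderiv_one_add_norm_sq_rpow_apply_self {E : Type*} [NormedAddCommGroup E]
    [InnerProductSpace ℝ E] (a : ℝ) (y : E) :
    fderiv ℝ (fun x : E => (1 + ‖x‖ ^ 2) ^ a) y y = 2 * a * ‖y‖ ^ 2 * (1 + ‖y‖ ^ 2) ^ (a - 1) := by
  have hpos : (0 : ℝ) < 1 + ‖y‖ ^ 2 := by positivity
  have hsq : HasFDerivAt (fun x : E => 1 + ‖x‖ ^ 2) (2 • innerSL ℝ y) y := by
    simpa using (hasFDerivAt_id y).norm_sq.const_add (1 : ℝ)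
  rw [(hsq.rpow_const (p := a) (Or.inl hpos.ne')).fderiv]
  simp only [smul_apply, smul_eq_mul, innerSL_apply_apply,
    real_inner_self_eq_norm_sq, nsmul_eq_mul]
  ring

def bubbleConst (n : ℕ) : ℝ := ((n : ℝ) * ((n : ℝ) - 2)) ^ (((n : ℝ) - 2) / 4)

theorem stdBubble_eq (n : ℕ) :
    stdBubble n = fun y => bubbleConst n * (1 + ‖y‖ ^ 2) ^ (-(((n : ℝ) - 2) / 2)) :=
  rfl

theorem cast_sub_two_pos {n : ℕ} (hn : 3 ≤ n) : (0 : ℝ) < n - 2 := by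
  have : (3 : ℝ) ≤ n := by exact_mod_cast hn
  linarith

theorem bubbleConst_pos {n : ℕ} (hn : 3 ≤ n) : 0 < bubbleConst n := by
  have h := cast_sub_two_pos hn
  exact Real.rpow_pos_of_pos (mul_pos (by linarith) h) _

theorem kerZlast_eq (n : ℕ) (y : EuclideanSpace ℝ (Fin n)) :
    kerZlast n y =
      bubbleConst n * (((n : ℝ) - 2) / 2) * (1 - ‖y‖ ^ 2) * (1 + ‖y‖ ^ 2) ^ (-(n : ℝ) / 2) := by
  have hpos : (0 : ℝ) < 1 + ‖y‖ ^ 2 := by positivity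
  have hderiv : fderiv ℝ (stdBubble n) y y =
      bubbleConst n * fderiv ℝ (fun x : EuclideanSpace ℝ (Fin n) =>
        (1 + ‖x‖ ^ 2) ^ (-(((n : ℝ) - 2) / 2))) y y := by
    rw [stdBubble_eq, fderiv_const_mul]
    · rfl
    · exact (differentiableAt_id.norm_sq ℝ |>.const_add 1).rpow_const (Or.inl hpos.ne')
  rw [kerZlast, hderiv, fderiv_one_add_norm_sq_rpow_apply_self, stdBubble_eq]
  beta_reduce
  rw [show -(((n : ℝ) - 2) / 2) - 1 = -(n : ℝ) / 2 by ring,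
    show -(((n : ℝ) - 2) / 2) = -(n : ℝ) / 2 + 1 by ring, Real.rpow_add_one hpos.ne']
  ring

theorem stdBubble_rpow {n : ℕ} (hn : 3 ≤ n) (y : EuclideanSpace ℝ (Fin n)) (q : ℝ) :
    stdBubble n y ^ q = bubbleConst n ^ q * (1 + ‖y‖ ^ 2) ^ (-(((n : ℝ) - 2) / 2) * q) := by
  have hpos : (0 : ℝ) < 1 + ‖y‖ ^ 2 := by positivity
  rw [stdBubble_eq, Real.mul_rpow (bubbleConst_pos hn).le (Real.rpow_nonneg hpos.le _),
    ← Real.rpow_mul hpos.le]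

theorem stdBubble_rpow_critical {n : ℕ} (hn : 3 ≤ n) (y : EuclideanSpace ℝ (Fin n)) :
    stdBubble n y ^ (((n : ℝ) + 2) / ((n : ℝ) - 2)) =
      bubbleConst n ^ (((n : ℝ) + 2) / ((n : ℝ) - 2)) * (1 + ‖y‖ ^ 2) ^ (-((n : ℝ) + 2) / 2) := by
  have := (cast_sub_two_pos hn).ne'
  rw [stdBubble_rpow hn]
  congr 2
  field_simp

theorem critical_mul_kerZlast_eq {n : ℕ} (hn : 3 ≤ n) (y : EuclideanSpace ℝ (Fin n)) :
    ((n : ℝ) + 2) / ((n : ℝ) - 2) * stdBubble n y ^ (((n : ℝ) + 2) / ((n : ℝ) - 2) - 1) *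
        kerZlast n y =
      bubbleConst n ^ (((n : ℝ) + 2) / ((n : ℝ) - 2)) * (((n : ℝ) + 2) / 2) *
        (2 * (1 + ‖y‖ ^ 2) ^ (-((n : ℝ) + 2 + 2) / 2) - (1 + ‖y‖ ^ 2) ^ (-((n : ℝ) + 2) / 2)) := by
  have := (cast_sub_two_pos hn).ne'
  have hpos : (0 : ℝ) < 1 + ‖y‖ ^ 2 := by positivity
  have hα := (bubbleConst_pos hn).ne'
  have hexp : -(((n : ℝ) - 2) / 2) * (((n : ℝ) + 2) / ((n : ℝ) - 2) - 1) + -(n : ℝ) / 2 =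
      -((n : ℝ) + 2 + 2) / 2 := by
    field_simp; ring
  have hshift : (1 + ‖y‖ ^ 2) ^ (-((n : ℝ) + 2) / 2) =
      (1 + ‖y‖ ^ 2) ^ (-((n : ℝ) + 2 + 2) / 2) * (1 + ‖y‖ ^ 2) := by
    rw [← Real.rpow_add_one hpos.ne']; ring_nf
  rw [stdBubble_rpow hn, kerZlast_eq, Real.rpow_sub_one hα, hshift, ← hexp, Real.rpow_add hpos]
  field_simp
  ring

/-- for `n ≥ 3`, `p = (n+2)/(n-2)`,
`∫ p U^{p-1} Z_{n+1} = -((n-2)/2) ∫ U^p`, both integrals being finite. -/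
theorem statement7 (n : ℕ) (hn : 3 ≤ n) :
    Integrable (fun y : EuclideanSpace ℝ (Fin n) =>
      (((n : ℝ) + 2) / ((n : ℝ) - 2)) *
        stdBubble n y ^ ((((n : ℝ) + 2) / ((n : ℝ) - 2)) - 1) * kerZlast n y) ∧
    Integrable (fun y : EuclideanSpace ℝ (Fin n) =>
      stdBubble n y ^ (((n : ℝ) + 2) / ((n : ℝ) - 2))) ∧
    ∫ y : EuclideanSpace ℝ (Fin n),
        (((n : ℝ) + 2) / ((n : ℝ) - 2)) *
          stdBubble n y ^ ((((n : ℝ) + 2) / ((n : ℝ) - 2)) - 1) * kerZlast n y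
      = -(((n : ℝ) - 2) / 2) *
          ∫ y : EuclideanSpace ℝ (Fin n), stdBubble n y ^ (((n : ℝ) + 2) / ((n : ℝ) - 2)) := by
  have : Nontrivial (EuclideanSpace ℝ (Fin n)) :=
    Module.nontrivial_of_finrank_pos (R := ℝ) (by rw [finrank_euclideanSpace_fin]; omega)
  have hdim : (Module.finrank ℝ (EuclideanSpace ℝ (Fin n)) : ℝ) = n := by
    rw [finrank_euclideanSpace_fin]
  have hint_n2 := integrable_rpow_neg_one_add_norm_sq
    (μ := (volume : Measure (EuclideanSpace ℝ (Fin n)))) (r := n + 2) (by rw [hdim]; linarith)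
  have hint_n4 := integrable_rpow_neg_one_add_norm_sq
    (μ := (volume : Measure (EuclideanSpace ℝ (Fin n)))) (r := n + 2 + 2) (by rw [hdim]; linarith)
  have hrec := integral_one_add_norm_sq_rpow_recursion
    (volume : Measure (EuclideanSpace ℝ (Fin n))) (s := n + 2) (by rw [hdim]; linarith)
  rw [hdim] at hrec
  simp only [critical_mul_kerZlast_eq hn, stdBubble_rpow_critical hn]
  refine ⟨((hint_n4.const_mul 2).sub hint_n2).const_mul _, hint_n2.const_mul _, ?_⟩
  rw [integral_const_mul, integral_sub (hint_n4.const_mul 2) hint_n2, integral_const_mul,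
    integral_const_mul]
  linear_combination bubbleConst n ^ (((n : ℝ) + 2) / ((n : ℝ) - 2)) * hrec
end
end

section
/- Let λ₀ > 0, T > 0, let μ : [0,T) → (0,∞) be continuous with μ(t) ≥ α(T−t)² for some α > 0, and let q : [0,T) → ℝ be continuous and bounded. Define E(t) = exp(λ₀ ∫_0^ت μ(τ)^{−2} dτ) and p(t) = E(t) ∫_t^T E(s)^{−1} μ(s)^{−2} q(s) ds. Then the integral defining p converges for every t ∈ [0,T), p is differentiable on [0,T), and μ(t)² p'(t) = λ₀ p(t) − q(t) for all t ∈ [0,T). -/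
open Set MeasureTheory Filter Topology

noncomputable section

/-! With `E = exp (λ ∫₀ w)` and `w = μ⁻²`, the function `E⁻¹` has derivative `-λ w E⁻¹`. Hence for
`|q| ≤ M` the integrand `E⁻¹ w q` is dominated by `M w E⁻¹ = (-(M/λ) E⁻¹)'`, whose integral over any
`[t, s] ⊆ [t, T)` is at most `(M/λ) E(t)⁻¹`; this bounds the tail integral without using any decay
of `E⁻¹` at `T`. The equation `μ² p' = λ p - q` is then the product rule for `E` times the tail
integral, whose derivative is `-E⁻¹ w q` by the fundamental theorem of calculus. -/

section TailIntegral

variable {E : Type*} [NormedAddCommGroup E] [NormedSpace ℝ E] [CompleteSpace E]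
  {f : ℝ → E} {a b : ℝ}

theorem hasDerivWithinAt_intervalIntegral_Ico (hf : ContinuousOn f (Ico a b)) {c t : ℝ}
    (hc : c ∈ Ico a b) (ht : t ∈ Ico a b) :
    HasDerivWithinAt (fun r => ∫ x in c..r, f x) (f t) (Ico a b) t := by
  -- `Icc a d` is a neighbourhood of `t` within `Ico a b` on which the FTC filters are available
  obtain ⟨d, htd, hdb⟩ := exists_between ht.2
  have hsub : Icc a d ⊆ Ico a b := Icc_subset_Ico_right hdb
  have : Fact (t ∈ Icc a d) := ⟨⟨ht.1, htd.le⟩⟩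
  have hnhds : Icc a d ∈ 𝓝[Ico a b] t :=
    mem_nhdsWithin.2 ⟨Iio d, isOpen_Iio, htd, fun x hx => ⟨hx.2.1, hx.1.le⟩⟩
  have hint : IntervalIntegrable f volume c t :=
    (hf.mono (ordConnected_Ico.uIcc_subset hc ht)).intervalIntegrable
  exact (intervalIntegral.integral_hasDerivWithinAt_right hint
    ((hf.mono hsub).stronglyMeasurableAtFilter_nhdsWithin measurableSet_Icc t)
    ((hf t ht).mono hsub)).mono_of_mem_nhdsWithin hnhds

theorem hasDerivWithinAt_setIntegral_Ioc (hf : ContinuousOn f (Ico a b))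
    (hfi : IntegrableOn f (Ioc a b)) {t : ℝ} (ht : t ∈ Ico a b) :
    HasDerivWithinAt (fun r => ∫ s in Ioc r b, f s) (-f t) (Ico a b) t := by
  have hab : a < b := ht.1.trans_lt ht.2
  have htail : ∀ r ∈ Ico a b, ∫ s in Ioc r b, f s = (∫ s in a..b, f s) - ∫ s in a..r, f s := by
    intro r hr
    rw [intervalIntegral.integral_interval_sub_left
      ((intervalIntegrable_iff_integrableOn_Ioc_of_le hab.le).2 hfi)
      ((intervalIntegrable_iff_integrableOn_Ioc_of_le hr.1).2
        (hfi.mono_set (Ioc_subset_Ioc_right hr.2.le))),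
      intervalIntegral.integral_of_le hr.2.le]
  exact ((hasDerivWithinAt_intervalIntegral_Ico hf ⟨le_rfl, hab⟩ ht).const_sub _).congr htail
    (htail t ht)

end TailIntegral

theorem integrableOn_Ioc_of_norm_le_deriv {E : Type*} [NormedAddCommGroup E] {f : ℝ → E}
    {G G' : ℝ → ℝ} {a b C : ℝ} (hf : ContinuousOn f (Ico a b)) (hG : ContinuousOn G (Ico a b))
    (hG' : ∀ x ∈ Ioo a b, HasDerivAt G (G' x) x) (hfG : ∀ x ∈ Ioo a b, ‖f x‖ ≤ G' x)
    (hGC : ∀ x ∈ Ico a b, G x ≤ C) : IntegrableOn f (Ioc a b) := by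
  rcases le_or_gt b a with hba | hab
  · simp [Ioc_eq_empty hba.not_gt]
  obtain ⟨u, -, hu, hlim⟩ := exists_seq_strictMono_tendsto' hab
  have hsub : ∀ n, Icc a (u n) ⊆ Ico a b := fun n => Icc_subset_Ico_right (hu n).2
  refine integrableOn_Ioc_of_intervalIntegral_norm_bounded_right (I := C - G a)
    (fun n => ((hf.mono (hsub n)).integrableOn_Icc).mono_set Ioc_subset_Icc_self) hlim
    (Eventually.of_forall fun n => ?_)
  rw [← intervalIntegral.integral_of_le (hu n).1.le]
  calc ∫ x in a..u n, ‖f x‖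
      ≤ G (u n) - G a :=
        intervalIntegral.integral_le_sub_of_hasDeriv_right_of_le (hu n).1.le (hG.mono (hsub n))
          (fun x hx => (hG' x ⟨hx.1, hx.2.trans (hu n).2⟩).hasDerivWithinAt)
          ((hf.mono (hsub n)).norm.integrableOn_Icc)
          (fun x hx => hfG x ⟨hx.1, hx.2.trans (hu n).2⟩)
    _ ≤ C - G a := by linarith [hGC (u n) (hsub n ⟨(hu n).1.le, le_rfl⟩)]

def expWeight (lam : ℝ) (w : ℝ → ℝ) (r : ℝ) : ℝ :=
  Real.exp (lam * ∫ τ in (0 : ℝ)..r, w τ)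

section ExpWeight

variable {lam T M : ℝ} {w q : ℝ → ℝ}

theorem expWeight_pos (lam : ℝ) (w : ℝ → ℝ) (r : ℝ) : 0 < expWeight lam w r :=
  Real.exp_pos _

theorem hasDerivWithinAt_expWeight (hw : ContinuousOn w (Ico 0 T)) {t : ℝ} (ht : t ∈ Ico 0 T) :
    HasDerivWithinAt (expWeight lam w) (expWeight lam w t * (lam * w t)) (Ico 0 T) t :=
  ((hasDerivWithinAt_intervalIntegral_Ico hw ⟨le_rfl, ht.1.trans_lt ht.2⟩ ht).const_mul lam).exp

theorem continuousOn_expWeight (hw : ContinuousOn w (Ico 0 T)) :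
    ContinuousOn (expWeight lam w) (Ico 0 T) :=
  fun _ ht => (hasDerivWithinAt_expWeight hw ht).continuousWithinAt

theorem continuousOn_inv_expWeight (hw : ContinuousOn w (Ico 0 T)) :
    ContinuousOn (fun r => (expWeight lam w r)⁻¹) (Ico 0 T) :=
  (continuousOn_expWeight hw).inv₀ fun _ _ => (expWeight_pos _ _ _).ne'

theorem hasDerivAt_inv_expWeight (hw : ContinuousOn w (Ico 0 T)) {x : ℝ} (hx : x ∈ Ioo 0 T) :
    HasDerivAt (fun r => (expWeight lam w r)⁻¹) (-(lam * w x * (expWeight lam w x)⁻¹)) x := by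
  have hE := ((hasDerivWithinAt_expWeight (lam := lam) hw (Ioo_subset_Ico_self hx)).hasDerivAt
    (Ico_mem_nhds hx.1 hx.2)).inv (expWeight_pos _ _ _).ne'
  refine hE.congr_deriv ?_
  field_simp

theorem integrableOn_expWeight_inv_mul (hlam : 0 < lam) (hw : ContinuousOn w (Ico 0 T))
    (hw0 : ∀ x ∈ Ico 0 T, 0 ≤ w x) (hq : ContinuousOn q (Ico 0 T))
    (hqM : ∀ x ∈ Ico 0 T, |q x| ≤ M) {t : ℝ} (ht : t ∈ Ico 0 T) :
    IntegrableOn (fun s => (expWeight lam w s)⁻¹ * w s * q s) (Ioc t T) := by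
  have hsub : Ico t T ⊆ Ico 0 T := Ico_subset_Ico_left ht.1
  have hM : 0 ≤ M := (abs_nonneg _).trans (hqM t ht)
  have hEinv := continuousOn_inv_expWeight (lam := lam) hw
  -- `-(M/λ) E⁻¹` is a nonpositive primitive of the majorant `M w E⁻¹` of the integrand
  refine integrableOn_Ioc_of_norm_le_deriv (G := fun s => -(M / lam) * (expWeight lam w s)⁻¹)
    (G' := fun s => M * w s * (expWeight lam w s)⁻¹) (C := 0)
    (((hEinv.mul hw).mul hq).mono hsub) ((continuousOn_const.mul hEinv).mono hsub)
    (fun x hx => ?_) (fun x hx => ?_) (fun x _ => ?_)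
  · refine ((hasDerivAt_inv_expWeight hw ⟨ht.1.trans_lt hx.1, hx.2⟩).const_mul
      (-(M / lam))).congr_deriv ?_
    field_simp
  · have hx' : x ∈ Ico 0 T := hsub (Ioo_subset_Ico_self hx)
    have hE : 0 ≤ (expWeight lam w x)⁻¹ := (inv_pos.2 (expWeight_pos _ _ _)).le
    rw [Real.norm_eq_abs, abs_mul, abs_mul, abs_of_nonneg hE, abs_of_nonneg (hw0 x hx')]
    nlinarith [hqM x hx', mul_nonneg hE (hw0 x hx')]
  · have : 0 ≤ M / lam * (expWeight lam w x)⁻¹ :=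
      mul_nonneg (div_nonneg hM hlam.le) (inv_pos.2 (expWeight_pos _ _ _)).le
    linarith

theorem hasDerivWithinAt_expWeight_mul_setIntegral_Ioc (hw : ContinuousOn w (Ico 0 T))
    (hq : ContinuousOn q (Ico 0 T))
    (hi : IntegrableOn (fun s => (expWeight lam w s)⁻¹ * w s * q s) (Ioc 0 T))
    {t : ℝ} (ht : t ∈ Ico 0 T) :
    HasDerivWithinAt
      (fun r => expWeight lam w r * ∫ s in Ioc r T, (expWeight lam w s)⁻¹ * w s * q s)
      ((lam * (expWeight lam w t * ∫ s in Ioc t T, (expWeight lam w s)⁻¹ * w s * q s) - q t) *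
        w t) (Ico 0 T) t := by
  have hEinv := continuousOn_inv_expWeight (lam := lam) hw
  refine ((hasDerivWithinAt_expWeight hw ht).mul
    (hasDerivWithinAt_setIntegral_Ioc ((hEinv.mul hw).mul hq) hi ht)).congr_deriv ?_
  simp only [Pi.mul_apply]
  linear_combination (-(q t * w t)) * mul_inv_cancel₀ (expWeight_pos lam w t).ne'

end ExpWeight

theorem statement12_general (lam0 T α : ℝ) (hlam0 : 0 < lam0) (hα : 0 < α)
    (μ : ℝ → ℝ) (hμc : ContinuousOn μ (Ico 0 T))
    (hμlow : ∀ t ∈ Ico (0 : ℝ) T, α * (T - t) ^ 2 ≤ μ t)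
    (q : ℝ → ℝ) (hqc : ContinuousOn q (Ico 0 T))
    (M : ℝ) (hqb : ∀ t ∈ Ico (0 : ℝ) T, |q t| ≤ M) :
    (∀ t ∈ Ico (0 : ℝ) T,
      IntegrableOn
        (fun s => (Real.exp (lam0 * ∫ τ in (0 : ℝ)..s, (μ τ ^ 2)⁻¹))⁻¹ * (μ s ^ 2)⁻¹ * q s)
        (Ioc t T)) ∧
    ∀ t ∈ Ico (0 : ℝ) T,
      HasDerivWithinAt
        (fun r => Real.exp (lam0 * ∫ τ in (0 : ℝ)..r, (μ τ ^ 2)⁻¹) *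
          ∫ s in Ioc r T,
            (Real.exp (lam0 * ∫ τ in (0 : ℝ)..s, (μ τ ^ 2)⁻¹))⁻¹ * (μ s ^ 2)⁻¹ * q s)
        ((lam0 *
            (Real.exp (lam0 * ∫ τ in (0 : ℝ)..t, (μ τ ^ 2)⁻¹) *
              ∫ s in Ioc t T,
                (Real.exp (lam0 * ∫ τ in (0 : ℝ)..s, (μ τ ^ 2)⁻¹))⁻¹ * (μ s ^ 2)⁻¹ * q s) -
            q t) / μ t ^ 2)
        (Ico 0 T) t := by
  have hμ : ∀ t ∈ Ico (0 : ℝ) T, μ t ≠ 0 := fun t ht =>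
    ((mul_pos hα (pow_pos (sub_pos.2 ht.2) 2)).trans_le (hμlow t ht)).ne'
  have hw : ContinuousOn (fun τ => (μ τ ^ 2)⁻¹) (Ico 0 T) :=
    (hμc.pow 2).inv₀ fun t ht => pow_ne_zero 2 (hμ t ht)
  have hint : ∀ t ∈ Ico (0 : ℝ) T,
      IntegrableOn (fun s => (expWeight lam0 (fun τ => (μ τ ^ 2)⁻¹) s)⁻¹ * (μ s ^ 2)⁻¹ * q s)
        (Ioc t T) :=
    fun t ht => integrableOn_expWeight_inv_mul hlam0 hw (fun _ _ => by positivity) hqc hqb ht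
  refine ⟨hint, fun t ht => ?_⟩
  rw [div_eq_mul_inv]
  exact hasDerivWithinAt_expWeight_mul_setIntegral_Ioc hw hqc
    (hint 0 ⟨le_rfl, ht.1.trans_lt ht.2⟩) ht

/-- the representation of the non-growing solution of the projected equation
`μ² ṗ - λ₀ p = -q`. With `E(t) = exp(λ₀ ∫_0^t μ(τ)^{-2} dτ)` and
`p(t) = E(t) ∫_t^T E(s)^{-1} μ(s)^{-2} q(s) ds`, the integral defining `p` converges for
every `t ∈ [0,T)`, `p` is differentiable on `[0,T)`, and `μ² p' = λ₀ p - q` there. -/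
theorem statement12 (lam0 T α : ℝ) (hlam0 : 0 < lam0) (hT : 0 < T) (hα : 0 < α)
    (μ : ℝ → ℝ) (hμc : ContinuousOn μ (Ico 0 T))
    (hμlow : ∀ t ∈ Ico (0 : ℝ) T, α * (T - t) ^ 2 ≤ μ t)
    (q : ℝ → ℝ) (hqc : ContinuousOn q (Ico 0 T))
    (M : ℝ) (hqb : ∀ t ∈ Ico (0 : ℝ) T, |q t| ≤ M) :
    (∀ t ∈ Ico (0 : ℝ) T,
      IntegrableOn
        (fun s => (Real.exp (lam0 * ∫ τ in (0 : ℝ)..s, (μ τ ^ 2)⁻¹))⁻¹ * (μ s ^ 2)⁻¹ * q s)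
        (Ioc t T)) ∧
    ∀ t ∈ Ico (0 : ℝ) T,
      HasDerivWithinAt
        (fun r => Real.exp (lam0 * ∫ τ in (0 : ℝ)..r, (μ τ ^ 2)⁻¹) *
          ∫ s in Ioc r T,
            (Real.exp (lam0 * ∫ τ in (0 : ℝ)..s, (μ τ ^ 2)⁻¹))⁻¹ * (μ s ^ 2)⁻¹ * q s)
        ((lam0 *
            (Real.exp (lam0 * ∫ τ in (0 : ℝ)..t, (μ τ ^ 2)⁻¹) *
              ∫ s in Ioc t T,
                (Real.exp (lam0 * ∫ τ in (0 : ℝ)..s, (μ τ ^ 2)⁻¹))⁻¹ * (μ s ^ 2)⁻¹ * q s) -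
            q t) / μ t ^ 2)
        (Ico 0 T) t :=
  statement12_general lam0 T α hlam0 hα μ hμc hμlow q hqc M hqb
end
end
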